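/- arXiv:2304.09950 — 2 statements merged into one kernel-verified Lean document; each statement's English description precedes it below -/
import Mathlib

section
/- Let N be a seminorm on a real vector space V and let u, v ∈ V satisfy N(u + v) = N(u) + N(v). Then for all real numbers a ≥ b ≥ 0 one has N(a • u + b • v) = a * N(u) + b * N(v). -/
theorem seminorm_additive_extend
    {V : Type*} [AddCommGroup V] [Module ℝ V] (N : Seminorm ℝ V)
    (u v : V) (h : N (u + v) = N u + N v) :
    ∀ a b : ℝ, 0 ≤ b → b ≤ a →
      N (a • u + b • v) = a * N u + b * N v := by
  intro a b hb hba
  have ha : 0 ≤ a := hb.trans hba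
  have hup : N (a • u + b • v) ≤ a * N u + b * N v := by
    calc N (a • u + b • v) ≤ N (a • u) + N (b • v) := map_add_le_add N _ _
    _ = a * N u + b * N v := by
        rw [map_smul_eq_mul, map_smul_eq_mul, Real.norm_eq_abs, Real.norm_eq_abs,
          abs_of_nonneg ha, abs_of_nonneg hb]
  have hlow : a * N u + b * N v ≤ N (a • u + b • v) := by
    have key : a • (u + v) = (a • u + b • v) + (a - b) • v := by
      rw [smul_add, sub_smul]; abel
    have h1 : N (a • (u + v)) ≤ N (a • u + b • v) + N ((a - b) • v) := by
      rw [key]; exact map_add_le_add N _ _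
    rw [map_smul_eq_mul, map_smul_eq_mul, Real.norm_eq_abs, Real.norm_eq_abs,
      abs_of_nonneg ha, abs_of_nonneg (sub_nonneg.mpr hba), h] at h1
    nlinarith [h1]
  linarith
end

section
/- Let N be a norm on a real vector space V and let u, v ∈ V be linearly independent vectors such that N(a • u + b • v) = a * N(u) + b * N(v) for all reals a, b ≥ 0. Then the point (N(u + v))⁻¹ • (u + v) is not an extreme point of the closed unit ball {x : N(x) ≤ 1}. -/
/-!
The norm is additive on `u` and `v`, so `‖u + v‖ = ‖u‖ + ‖v‖`, and then `(u + v) / ‖u + v‖` is the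
convex combination of the unit vectors `u / ‖u‖` and `v / ‖v‖` with weights `‖u‖ / ‖u + v‖` and
`‖v‖ / ‖u + v‖`. These unit vectors are distinct by linear independence, so the normalised sum
lies in the interior of a segment of the unit ball.
-/

theorem inv_norm_smul_add_mem_openSegment {E : Type*} [SeminormedAddCommGroup E]
    [NormedSpace ℝ E] {x y : E} (hx : 0 < ‖x‖) (hy : 0 < ‖y‖) (h : ‖x + y‖ = ‖x‖ + ‖y‖) :
    ‖x + y‖⁻¹ • (x + y) ∈ openSegment ℝ (‖x‖⁻¹ • x) (‖y‖⁻¹ • y) := by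
  have hxy : 0 < ‖x + y‖ := h ▸ add_pos hx hy
  refine ⟨‖x‖ / ‖x + y‖, ‖y‖ / ‖x + y‖, div_pos hx hxy, div_pos hy hxy, ?_, ?_⟩
  · rw [← add_div, ← h, div_self hxy.ne']
  · simp only [smul_smul, div_mul_eq_mul_div, mul_inv_cancel₀ hx.ne', mul_inv_cancel₀ hy.ne',
      one_div, smul_add]

theorem LinearIndependent.inv_norm_smul_ne {E : Type*} [NormedAddCommGroup E] [NormedSpace ℝ E]
    {x y : E} (h : LinearIndependent ℝ ![x, y]) : ‖x‖⁻¹ • x ≠ ‖y‖⁻¹ • y := fun hxy =>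
  inv_ne_zero (norm_ne_zero_iff.mpr (h.ne_zero 0)) (h.eq_zero_of_pair' hxy).1

theorem notMem_extremePoints_of_mem_openSegment {E : Type*} [AddCommGroup E] [Module ℝ E]
    {A : Set E} {x y z : E} (hx : x ∈ A) (hy : y ∈ A) (hxy : x ≠ y)
    (hz : z ∈ openSegment ℝ x y) : z ∉ A.extremePoints ℝ := fun hext =>
  have ⟨hxz, hyz⟩ := (mem_extremePoints.mp hext).2 x hx y hy hz
  hxy (hxz.trans hyz.symm)

theorem not_extreme_of_additive_cone
    {V : Type*} [NormedAddCommGroup V] [NormedSpace ℝ V]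
    (u v : V) (hli : LinearIndependent ℝ ![u, v])
    (hadd : ∀ a b : ℝ, 0 ≤ a → 0 ≤ b → ‖a • u + b • v‖ = a * ‖u‖ + b * ‖v‖) :
    (‖u + v‖)⁻¹ • (u + v) ∉ Set.extremePoints ℝ {x : V | ‖x‖ ≤ 1} := by
  have hu : u ≠ 0 := hli.ne_zero 0
  have hv : v ≠ 0 := hli.ne_zero 1
  have hsum : ‖u + v‖ = ‖u‖ + ‖v‖ := by simpa using hadd 1 1 zero_le_one zero_le_one
  refine notMem_extremePoints_of_mem_openSegment ?_ ?_ hli.inv_norm_smul_ne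
    (inv_norm_smul_add_mem_openSegment (norm_pos_iff.mpr hu) (norm_pos_iff.mpr hv) hsum)
  · exact (norm_smul_inv_norm hu).le
  · exact (norm_smul_inv_norm hv).le
end
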